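/- arXiv:1807.10544 — 6 statements merged into one kernel-verified Lean document; each statement's English description precedes it below -/
import Mathlib

section
/- Let B ∈ ℝ^{p×m}, b : ℝ^q → ℝ^p, f : ℝ^m → ℝ, g : ℝ^q → ℝ, and let R ∈ ℝ^{p×p} be symmetric positive definite. Let x, x⁺, x† ∈ ℝ^m, u⁺, u† ∈ ℝ^q, y⁺ ∈ ℝ^p, and set r⁺ = b(u⁺) + B x⁺. Suppose: (a) g(u⁺) + (y⁺ + R B (x − x⁺))ᵀ b(u⁺) ≤ g(u†) + (y⁺ + R B (x − x⁺))ᵀ b(u†); (b) f(x⁺) + (y⁺)ᵀ B x⁺ ≤ f(x†) + (y⁺)ᵀ B x†; (c) b(u†) + B x† = 0. Then (f(x⁺) + g(u⁺)) − (f(x†) + g(u†)) ≤ −(y⁺)ᵀ r⁺ + (x − x⁺)ᵀ Bᵀ R (−r⁺ + B(x⁺ − x†)). -/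
open Matrix

/-- Under hypotheses (a)–(c),
`(f(x⁺) + g(u⁺)) − (f(x†) + g(u†)) ≤ −(y⁺)ᵀ r⁺ + (x − x⁺)ᵀ Bᵀ R (−r⁺ + B(x⁺ − x†))`
where `r⁺ = b(u⁺) + B x⁺`. -/
theorem stmt5 {p m q : ℕ} (B : Matrix (Fin p) (Fin m) ℝ)
    (b : (Fin q → ℝ) → Fin p → ℝ) (f : (Fin m → ℝ) → ℝ) (g : (Fin q → ℝ) → ℝ)
    (R : Matrix (Fin p) (Fin p) ℝ) (hR : R.PosDef)
    (x xplus xdag : Fin m → ℝ) (uplus udag : Fin q → ℝ) (yplus : Fin p → ℝ)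
    (rplus : Fin p → ℝ) (hr : rplus = b uplus + B.mulVec xplus)
    (ha : g uplus + (yplus + R.mulVec (B.mulVec (x - xplus))) ⬝ᵥ b uplus ≤
          g udag + (yplus + R.mulVec (B.mulVec (x - xplus))) ⬝ᵥ b udag)
    (hb : f xplus + yplus ⬝ᵥ B.mulVec xplus ≤ f xdag + yplus ⬝ᵥ B.mulVec xdag)
    (hc : b udag + B.mulVec xdag = 0) :
    (f xplus + g uplus) - (f xdag + g udag) ≤
      -(yplus ⬝ᵥ rplus) +
        (x - xplus) ⬝ᵥ Bᵀ.mulVec (R.mulVec (-rplus + B.mulVec (xplus - xdag))) := by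
  have hsym : Rᵀ = R := hR.1
  have hw : ∀ t : Fin p → ℝ,
      (x - xplus) ⬝ᵥ Bᵀ.mulVec (R.mulVec t) =
        (R.mulVec (B.mulVec (x - xplus))) ⬝ᵥ t := by
    intro t
    rw [Matrix.dotProduct_mulVec, Matrix.vecMul_transpose,
        Matrix.dotProduct_mulVec, ← Matrix.mulVec_transpose, hsym]
  rw [hw]
  have hbd : b udag = -(B.mulVec xdag) := by
    have := hc; linear_combination (norm := module) this
  subst hr
  simp only [hbd, add_dotProduct, dotProduct_add,
    dotProduct_neg, Matrix.mulVec_add, Matrix.mulVec_sub,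
    dotProduct_sub, neg_add, dotProduct_neg] at *
  linarith
end

section
/- Let B ∈ ℝ^{p×m}, b : ℝ^q → ℝ^p, f : ℝ^m → ℝ, g : ℝ^q → ℝ, and let R ∈ ℝ^{p×p} be symmetric positive definite. Let (u†, x†, y†) satisfy b(u†) + B x† = 0, g(u†) + (y†)ᵀ b(u†) ≤ g(u) + (y†)ᵀ b(u) for all u, and f(x†) + (y†)ᵀ B x† ≤ f(x) + (y†)ᵀ B x for all x. Let x, x⁺ ∈ ℝ^m, u⁺ ∈ ℝ^q, y⁺ ∈ ℝ^p with r⁺ = b(u⁺) + B x⁺, and suppose (a) g(u⁺) + (y⁺ + R B (x − x⁺))ᵀ b(u⁺) ≤ g(u†) + (y⁺ + R B (x − x⁺))ᵀ b(u†) and (b) f(x⁺) + (y⁺)ᵀ B x⁺ ≤ f(ξ) + (y⁺)ᵀ B ξ for all ξ ∈ ℝ^m. Then (y⁺ − y†)ᵀ r⁺ − (x⁺ − x)ᵀ Bᵀ R r⁺ + (x⁺ − x)ᵀ Bᵀ R B (x⁺ − x†) ≤ 0. -/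
/-!
Both pairs of optimality conditions are exchanged: testing the condition on `u⁺` at `u†` and the
one on `u†` at `u⁺`, and adding, gives `(y⁺ + R B (x − x⁺) − y†)ᵀ (b(u⁺) − b(u†)) ≤ 0`; the same with
`x⁺`, `x†` gives `(y⁺ − y†)ᵀ B (x⁺ − x†) ≤ 0`. Since `b(u†) = −B x†`, the sum of the two is the
claimed expression once the `R`-term is moved across with `Rᵀ = R`.
-/

open Matrix

theorem sub_dotProduct_sub_nonpos_of_le_of_le {α ι : Type*} [Fintype ι]
    (h : α → ℝ) (φ : α → ι → ℝ) {a c : ι → ℝ} {u v : α}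
    (hu : h u + a ⬝ᵥ φ u ≤ h v + a ⬝ᵥ φ v) (hv : h v + c ⬝ᵥ φ v ≤ h u + c ⬝ᵥ φ u) :
    (a - c) ⬝ᵥ (φ u - φ v) ≤ 0 := by
  simp only [sub_dotProduct, dotProduct_sub]
  linarith

theorem Matrix.IsSymm.mulVec_mulVec_dotProduct {α n k : Type*} [CommSemiring α]
    [Fintype n] [Fintype k] {R : Matrix n n α} (hR : R.IsSymm) (B : Matrix n k α)
    (v : k → α) (w : n → α) :
    R *ᵥ (B *ᵥ v) ⬝ᵥ w = v ⬝ᵥ Bᵀ *ᵥ (R *ᵥ w) := by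
  rw [dotProduct_comm, dotProduct_mulVec, ← mulVec_transpose, hR.eq, dotProduct_mulVec,
    ← mulVec_transpose, dotProduct_comm]

/-- Under the saddle hypotheses on `(u†, x†, y†)` and the update
hypotheses (a), (b), with `r⁺ = b(u⁺) + B x⁺`,
`(y⁺ − y†)ᵀ r⁺ − (x⁺ − x)ᵀ Bᵀ R r⁺ + (x⁺ − x)ᵀ Bᵀ R B (x⁺ − x†) ≤ 0`. -/
theorem stmt6 {p m q : ℕ} (B : Matrix (Fin p) (Fin m) ℝ)
    (b : (Fin q → ℝ) → Fin p → ℝ) (f : (Fin m → ℝ) → ℝ) (g : (Fin q → ℝ) → ℝ)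
    (R : Matrix (Fin p) (Fin p) ℝ) (hR : R.PosDef)
    (udag : Fin q → ℝ) (xdag : Fin m → ℝ) (ydag : Fin p → ℝ)
    (hfeas : b udag + B.mulVec xdag = 0)
    (hgdag : ∀ u : Fin q → ℝ, g udag + ydag ⬝ᵥ b udag ≤ g u + ydag ⬝ᵥ b u)
    (hfdag : ∀ x : Fin m → ℝ,
      f xdag + ydag ⬝ᵥ B.mulVec xdag ≤ f x + ydag ⬝ᵥ B.mulVec x)
    (x xplus : Fin m → ℝ) (uplus : Fin q → ℝ) (yplus : Fin p → ℝ)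
    (rplus : Fin p → ℝ) (hr : rplus = b uplus + B.mulVec xplus)
    (ha : g uplus + (yplus + R.mulVec (B.mulVec (x - xplus))) ⬝ᵥ b uplus ≤
          g udag + (yplus + R.mulVec (B.mulVec (x - xplus))) ⬝ᵥ b udag)
    (hb : ∀ ξ : Fin m → ℝ,
      f xplus + yplus ⬝ᵥ B.mulVec xplus ≤ f ξ + yplus ⬝ᵥ B.mulVec ξ) :
    (yplus - ydag) ⬝ᵥ rplus - (xplus - x) ⬝ᵥ Bᵀ.mulVec (R.mulVec rplus)
      + (xplus - x) ⬝ᵥ Bᵀ.mulVec (R.mulVec (B.mulVec (xplus - xdag))) ≤ 0 := by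
  have hsymm : R.IsSymm := isHermitian_iff_isSymm.mp hR.isHermitian
  have hu := sub_dotProduct_sub_nonpos_of_le_of_le g b ha (hgdag uplus)
  have hx := sub_dotProduct_sub_nonpos_of_le_of_le f (B *ᵥ ·) (hb xdag) (hfdag xplus)
  have hbdag : b udag = -(B *ᵥ xdag) := eq_neg_of_add_eq_zero_left hfeas
  have hd : R *ᵥ (B *ᵥ (x - xplus)) = -(R *ᵥ (B *ᵥ (xplus - x))) := by
    rw [← mulVec_neg, ← mulVec_neg, neg_sub]
  rw [hbdag, hd] at hu
  rw [← hsymm.mulVec_mulVec_dotProduct, ← hsymm.mulVec_mulVec_dotProduct]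
  simp only [hr, mulVec_sub, sub_dotProduct, dotProduct_sub, add_dotProduct, dotProduct_add,
    neg_dotProduct, dotProduct_neg] at hu hx ⊢
  linarith
end

section
/- Let B ∈ ℝ^{p×m}, b : ℝ^q → ℝ^p, f : ℝ^m → ℝ, g : ℝ^q → ℝ, and let R ∈ ℝ^{p×p} be symmetric positive definite. Let (u†, x†, y†) satisfy b(u†) + B x† = 0, g(u†) + (y†)ᵀ b(u†) ≤ g(u) + (y†)ᵀ b(u) for all u, and f(x†) + (y†)ᵀ B x† ≤ f(x) + (y†)ᵀ B x for all x. Define V(u, x, y) = ‖y − y†‖²_{R⁻¹} + ‖B(x − x†)‖²_R + ‖b(u) + Bx‖²_R. Suppose (u, x, y) and (u⁺, x⁺, y⁺) satisfy: (i) y⁺ = y + R (b(u⁺) + B x⁺); (ii) g(u⁺) + (y⁺ + R B (x − x⁺))ᵀ b(u⁺) ≤ g(ζ) + (y⁺ + R B (x − x⁺))ᵀ b(ζ) for all ζ ∈ ℝ^q; (iii) f(x) + yᵀ B x ≤ f(ξ) + yᵀ B ξ for all ξ ∈ ℝ^m; (iv) f(x⁺) + (y⁺)ᵀ B x⁺ ≤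 f(ξ) + (y⁺)ᵀ B ξ for all ξ ∈ ℝ^m. Then V(u⁺, x⁺, y⁺) − V(u, x, y) ≤ −‖b(u) + B x‖²_R − ‖B(x⁺ − x)‖²_R. -/
open Matrix

private lemma dot_symm {n : ℕ} {M : Matrix (Fin n) (Fin n) ℝ} (hM : Mᵀ = M)
    (a c : Fin n → ℝ) : a ⬝ᵥ M.mulVec c = c ⬝ᵥ M.mulVec a := by
  rw [Matrix.dotProduct_mulVec, ← Matrix.mulVec_transpose, hM, dotProduct_comm]

/-- One-step descent of the ADMM Lyapunov function
`V(u,x,y) = ‖y − y†‖²_{R⁻¹} + ‖B(x − x†)‖²_R + ‖b(u) + Bx‖²_R`: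
under the saddle hypotheses on `(u†, x†, y†)` and the update hypotheses
(i)–(iv), `V(u⁺,x⁺,y⁺) − V(u,x,y) ≤ −‖b(u) + Bx‖²_R − ‖B(x⁺ − x)‖²_R`. -/
theorem stmt7 {p m q : ℕ} (B : Matrix (Fin p) (Fin m) ℝ)
    (b : (Fin q → ℝ) → Fin p → ℝ) (f : (Fin m → ℝ) → ℝ) (g : (Fin q → ℝ) → ℝ)
    (R : Matrix (Fin p) (Fin p) ℝ) (hR : R.PosDef)
    (udag : Fin q → ℝ) (xdag : Fin m → ℝ) (ydag : Fin p → ℝ)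
    (hfeas : b udag + B.mulVec xdag = 0)
    (hgdag : ∀ u : Fin q → ℝ, g udag + ydag ⬝ᵥ b udag ≤ g u + ydag ⬝ᵥ b u)
    (hfdag : ∀ x : Fin m → ℝ,
      f xdag + ydag ⬝ᵥ B.mulVec xdag ≤ f x + ydag ⬝ᵥ B.mulVec x)
    (V : (Fin q → ℝ) → (Fin m → ℝ) → (Fin p → ℝ) → ℝ)
    (hV : ∀ (u : Fin q → ℝ) (x : Fin m → ℝ) (y : Fin p → ℝ),
      V u x y = (y - ydag) ⬝ᵥ R⁻¹.mulVec (y - ydag)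
        + B.mulVec (x - xdag) ⬝ᵥ R.mulVec (B.mulVec (x - xdag))
        + (b u + B.mulVec x) ⬝ᵥ R.mulVec (b u + B.mulVec x))
    (u uplus : Fin q → ℝ) (x xplus : Fin m → ℝ) (y yplus : Fin p → ℝ)
    (h1 : yplus = y + R.mulVec (b uplus + B.mulVec xplus))
    (h2 : ∀ ζ : Fin q → ℝ,
      g uplus + (yplus + R.mulVec (B.mulVec (x - xplus))) ⬝ᵥ b uplus ≤
        g ζ + (yplus + R.mulVec (B.mulVec (x - xplus))) ⬝ᵥ b ζ)
    (h3 : ∀ ξ : Fin m → ℝ, f x + y ⬝ᵥ B.mulVec x ≤ f ξ + y ⬝ᵥ B.mulVec ξ)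
    (h4 : ∀ ξ : Fin m → ℝ,
      f xplus + yplus ⬝ᵥ B.mulVec xplus ≤ f ξ + yplus ⬝ᵥ B.mulVec ξ) :
    V uplus xplus yplus - V u x y ≤
      -((b u + B.mulVec x) ⬝ᵥ R.mulVec (b u + B.mulVec x))
        - B.mulVec (xplus - x) ⬝ᵥ R.mulVec (B.mulVec (xplus - x)) := by
  have hRsymm : Rᵀ = R := hR.isHermitian
  have hdet : IsUnit R.det := isUnit_iff_ne_zero.mpr hR.det_pos.ne'
  have hinvsymm : (R⁻¹)ᵀ = R⁻¹ := by rw [Matrix.transpose_nonsing_inv, hRsymm]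
  have hcancel : ∀ v : Fin p → ℝ, R⁻¹.mulVec (R.mulVec v) = v := fun v => by
    rw [Matrix.mulVec_mulVec, Matrix.nonsing_inv_mul R hdet, Matrix.one_mulVec]
  have hcancel2 : ∀ v : Fin p → ℝ, R.mulVec (R⁻¹.mulVec v) = v := fun v => by
    rw [Matrix.mulVec_mulVec, Matrix.mul_nonsing_inv R hdet, Matrix.one_mulVec]
  have hsw : ∀ a c : Fin p → ℝ, (R.mulVec a) ⬝ᵥ c = a ⬝ᵥ R.mulVec c := fun a c => by
    rw [dotProduct_comm, dot_symm hRsymm]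
  have hbud : b udag = -B.mulVec xdag := eq_neg_of_add_eq_zero_left hfeas
  -- y-difference identity
  have hy' : yplus - ydag = (y - ydag) + R.mulVec (b uplus + B.mulVec xplus) := by
    rw [h1]; abel
  have hE1 : (yplus - ydag) ⬝ᵥ R⁻¹.mulVec (yplus - ydag)
      = (y - ydag) ⬝ᵥ R⁻¹.mulVec (y - ydag)
        + 2 * ((y - ydag) ⬝ᵥ (b uplus + B.mulVec xplus))
        + (b uplus + B.mulVec xplus) ⬝ᵥ R.mulVec (b uplus + B.mulVec xplus) := by
    rw [hy']
    have c1 : (R.mulVec (b uplus + B.mulVec xplus)) ⬝ᵥ R⁻¹.mulVec (y - ydag)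
        = (y - ydag) ⬝ᵥ (b uplus + B.mulVec xplus) := by
      rw [dot_symm hinvsymm, hcancel]
    have cc1 : b uplus ⬝ᵥ (y - ydag) = (y - ydag) ⬝ᵥ b uplus := dotProduct_comm _ _
    have cc2 : (B.mulVec xplus) ⬝ᵥ (y - ydag) = (y - ydag) ⬝ᵥ B.mulVec xplus :=
      dotProduct_comm _ _
    simp only [Matrix.mulVec_add, dotProduct_add, add_dotProduct,
      hcancel, hcancel2, c1, hsw]
    linarith [cc1, cc2]
  have hE2 : (B.mulVec (xplus - xdag)) ⬝ᵥ R.mulVec (B.mulVec (xplus - xdag))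
      = (B.mulVec (x - xdag)) ⬝ᵥ R.mulVec (B.mulVec (x - xdag))
        + 2 * ((B.mulVec (x - xdag)) ⬝ᵥ R.mulVec (B.mulVec (xplus - x)))
        + (B.mulVec (xplus - x)) ⬝ᵥ R.mulVec (B.mulVec (xplus - x)) := by
    have hdp : xplus - xdag = (x - xdag) + (xplus - x) := by abel
    rw [hdp]
    have c1 : (B.mulVec (xplus - x)) ⬝ᵥ R.mulVec (B.mulVec (x - xdag))
        = (B.mulVec (x - xdag)) ⬝ᵥ R.mulVec (B.mulVec (xplus - x)) :=
      dot_symm hRsymm _ _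
    simp only [Matrix.mulVec_add, dotProduct_add, add_dotProduct, c1]
    ring
  have hsplit : (B.mulVec (xplus - x)) ⬝ᵥ R.mulVec (B.mulVec (xplus - xdag))
      = (B.mulVec (x - xdag)) ⬝ᵥ R.mulVec (B.mulVec (xplus - x))
        + (B.mulVec (xplus - x)) ⬝ᵥ R.mulVec (B.mulVec (xplus - x)) := by
    have hdp : xplus - xdag = (x - xdag) + (xplus - x) := by abel
    have c1 : (B.mulVec (xplus - x)) ⬝ᵥ R.mulVec (B.mulVec (x - xdag))
        = (B.mulVec (x - xdag)) ⬝ᵥ R.mulVec (B.mulVec (xplus - x)) :=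
      dot_symm hRsymm _ _
    rw [hdp]
    simp only [Matrix.mulVec_add, dotProduct_add, c1]
  have hsub : (y - ydag) ⬝ᵥ (b uplus + B.mulVec xplus)
      = (yplus - ydag) ⬝ᵥ (b uplus + B.mulVec xplus)
        - (b uplus + B.mulVec xplus) ⬝ᵥ R.mulVec (b uplus + B.mulVec xplus) := by
    rw [hy', add_dotProduct, hsw]; ring
  -- F3 : s ⬝ᵥ R rp ≤ 0
  have hF3 : (B.mulVec (xplus - x)) ⬝ᵥ R.mulVec (b uplus + B.mulVec xplus) ≤ 0 := by
    have hRrp : R.mulVec (b uplus + B.mulVec xplus) = yplus - y := by rw [h1]; abel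
    rw [hRrp]
    have h3' := h3 xplus
    have h4' := h4 x
    have c1 : (B.mulVec xplus) ⬝ᵥ yplus = yplus ⬝ᵥ B.mulVec xplus :=
      dotProduct_comm _ _
    have c2 : (B.mulVec xplus) ⬝ᵥ y = y ⬝ᵥ B.mulVec xplus := dotProduct_comm _ _
    have c3 : (B.mulVec x) ⬝ᵥ yplus = yplus ⬝ᵥ B.mulVec x := dotProduct_comm _ _
    have c4 : (B.mulVec x) ⬝ᵥ y = y ⬝ᵥ B.mulVec x := dotProduct_comm _ _
    simp only [Matrix.mulVec_sub, sub_dotProduct, dotProduct_sub, c1, c2, c3, c4]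
    linarith
  -- F4
  have hF4 : (yplus - ydag) ⬝ᵥ (b uplus + B.mulVec xplus)
      ≤ (B.mulVec (xplus - x)) ⬝ᵥ R.mulVec (b uplus + B.mulVec xplus)
        - (B.mulVec (xplus - x)) ⬝ᵥ R.mulVec (B.mulVec (xplus - xdag)) := by
    have ha := hgdag uplus
    have hb := hfdag xplus
    have hc := h2 udag
    have hd := h4 xdag
    rw [hbud] at ha hc
    have s1 : (B.mulVec x) ⬝ᵥ R.mulVec (b uplus) = (b uplus) ⬝ᵥ R.mulVec (B.mulVec x) :=
      dot_symm hRsymm _ _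
    have s2 : (B.mulVec xplus) ⬝ᵥ R.mulVec (b uplus) = (b uplus) ⬝ᵥ R.mulVec (B.mulVec xplus) :=
      dot_symm hRsymm _ _
    have s3 : (B.mulVec x) ⬝ᵥ R.mulVec (B.mulVec xdag)
        = (B.mulVec xdag) ⬝ᵥ R.mulVec (B.mulVec x) := dot_symm hRsymm _ _
    have s4 : (B.mulVec xplus) ⬝ᵥ R.mulVec (B.mulVec xdag)
        = (B.mulVec xdag) ⬝ᵥ R.mulVec (B.mulVec xplus) := dot_symm hRsymm _ _
    have s5 : (B.mulVec x) ⬝ᵥ R.mulVec (B.mulVec xplus)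
        = (B.mulVec xplus) ⬝ᵥ R.mulVec (B.mulVec x) := dot_symm hRsymm _ _
    simp only [Matrix.mulVec_add, Matrix.mulVec_sub, Matrix.mulVec_neg,
      add_dotProduct, sub_dotProduct, neg_dotProduct,
      dotProduct_add, dotProduct_sub, dotProduct_neg, hsw]
      at ha hb hc hd ⊢
    linarith [s1, s2, s3, s4, s5]
  -- combine
  rw [hV uplus xplus yplus, hV u x y, hE1]
  linarith [hF3, hF4, hsub, hsplit, hE2]
end

section
/- Let B ∈ ℝ^{p×m}, b : ℝ^q → ℝ^p, f : ℝ^m → ℝ, g : ℝ^q → ℝ, and let R ∈ ℝ^{p×p} be symmetric positive definite. Let (u†, x†, y†) satisfy b(u†) + B x† = 0, g(u†) + (y†)ᵀ b(u†) ≤ g(u) + (y†)ᵀ b(u) for all u, and f(x†) + (y†)ᵀ B x† ≤ f(x) + (y†)ᵀ B x for all x. Define r^j = b(u^j) + B x^j and V^j = ‖y^j − y†‖²_{R⁻¹} + ‖B(x^j − x†)‖²_R + ‖r^j‖²_R. Suppose the sequence (u^j, x^j, y^j)_{j≥0} satisfies, for every j ≥ 0: (i) y^{j+1} = y^j + R r^{j+1};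 (ii) g(u^{j+1}) + (y^{j+1} + R B (x^j − x^{j+1}))ᵀ b(u^{j+1}) ≤ g(ζ) + (y^{j+1} + R B (x^j − x^{j+1}))ᵀ b(ζ) for all ζ ∈ ℝ^q; (iii) f(x^j) + (y^j)ᵀ B x^j ≤ f(ξ) + (y^j)ᵀ B ξ for all ξ ∈ ℝ^m. Then the sequence (V^j) is nonincreasing, Σ_{j=0}^{∞} (‖r^j‖²_R + ‖B(x^{j+1} − x^j)‖²_R) ≤ V^0, and r^j → 0 and B(x^{j+1} − x^j) → 0 as j → ∞. -/
/-!
Adding up pairs of variational inequalities (the `u`- and `x`-updates against the saddle point,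
and two consecutive `x`-updates against each other) yields three monotonicity inequalities;
expanding the `R`- and `R⁻¹`-forms, they give the one-step estimate
`V^{j+1} + ‖r^j‖²_R + ‖B(x^{j+1} − x^j)‖²_R ≤ V^j`. Since `V ≥ 0`, telescoping bounds the partial
sums by `V^0`; the summands therefore tend to `0`, and positive definiteness of `R` turns
`‖w‖²_R → 0` into `w → 0`.
-/

open Matrix Filter Topology

section

variable {n : Type*} [Fintype n]

theorem Matrix.IsSymm.dotProduct_mulVec_comm {α : Type*} [CommSemiring α] {R : Matrix n n α}
    (hR : R.IsSymm) (v w : n → α) : v ⬝ᵥ R *ᵥ w = w ⬝ᵥ R *ᵥ v := by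
  rw [dotProduct_mulVec, ← mulVec_transpose, hR.eq, dotProduct_comm]

theorem Matrix.IsSymm.mulVec_dotProduct {α : Type*} [CommSemiring α] {R : Matrix n n α}
    (hR : R.IsSymm) (v w : n → α) : R *ᵥ v ⬝ᵥ w = v ⬝ᵥ R *ᵥ w := by
  rw [dotProduct_comm, hR.dotProduct_mulVec_comm]

theorem Matrix.IsSymm.add_dotProduct_mulVec_add {α : Type*} [CommRing α] {R : Matrix n n α}
    (hR : R.IsSymm) (v w : n → α) :
    (v + w) ⬝ᵥ R *ᵥ (v + w) = v ⬝ᵥ R *ᵥ v + 2 * (v ⬝ᵥ R *ᵥ w) + w ⬝ᵥ R *ᵥ w := by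
  rw [mulVec_add, add_dotProduct, dotProduct_add, dotProduct_add, hR.dotProduct_mulVec_comm w v]
  ring

theorem Matrix.IsSymm.add_mulVec_dotProduct_inv_mulVec [DecidableEq n] {α : Type*} [CommRing α]
    {R : Matrix n n α} (hR : R.IsSymm) (hdet : IsUnit R.det) (d r : n → α) :
    (d + R *ᵥ r) ⬝ᵥ R⁻¹ *ᵥ (d + R *ᵥ r) = d ⬝ᵥ R⁻¹ *ᵥ d + 2 * (d ⬝ᵥ r) + r ⬝ᵥ R *ᵥ r := by
  have inv_mulVec_mulVec : ∀ v, R⁻¹ *ᵥ (R *ᵥ v) = v := fun v => by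
    rw [mulVec_mulVec, nonsing_inv_mul _ hdet, one_mulVec]
  have mulVec_inv_mulVec : ∀ v, R *ᵥ (R⁻¹ *ᵥ v) = v := fun v => by
    rw [mulVec_mulVec, mul_nonsing_inv _ hdet, one_mulVec]
  rw [mulVec_add, add_dotProduct, dotProduct_add, dotProduct_add, inv_mulVec_mulVec,
    hR.mulVec_dotProduct, hR.mulVec_dotProduct, mulVec_inv_mulVec, dotProduct_comm r d,
    dotProduct_comm r (R *ᵥ r)]
  ring

/-- Componentwise, `|w i| ≤ ‖c‖_R ‖w‖_R` by Cauchy–Schwarz for the form of `R`,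
with `c = R⁻¹ eᵢ`. -/
theorem Matrix.PosDef.tendsto_zero_of_tendsto_dotProduct_mulVec [DecidableEq n]
    {R : Matrix n n ℝ} (hR : R.PosDef) {ι : Type*} {l : Filter ι} {w : ι → n → ℝ}
    (h : Tendsto (fun j => w j ⬝ᵥ R *ᵥ w j) l (𝓝 0)) : Tendsto w l (𝓝 0) := by
  have hS : R.IsSymm := isHermitian_iff_isSymm.mp hR.isHermitian
  rw [tendsto_pi_nhds]
  intro i
  set c := R⁻¹ *ᵥ Pi.single i 1
  have hc : ∀ v, c ⬝ᵥ R *ᵥ v = v i := fun v => by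
    rw [← hS.mulVec_dotProduct, mulVec_mulVec, mul_nonsing_inv _ hR.det_pos.ne'.isUnit,
      one_mulVec, single_one_dotProduct]
  have cauchy_schwarz : ∀ j, w j i ^ 2 ≤ (c ⬝ᵥ R *ᵥ c) * (w j ⬝ᵥ R *ᵥ w j) := fun j => by
    simpa only [toBilin'_apply', hS.dotProduct_mulVec_comm (w j) c, hc, ← sq] using
      (toBilin' R).apply_mul_apply_le_of_forall_zero_le
        (fun v => by
          simpa only [toBilin'_apply', star_trivial] using
            hR.posSemidef.dotProduct_mulVec_nonneg v)
        c (w j)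
  refine squeeze_zero_norm (fun j => Real.abs_le_sqrt (cauchy_schwarz j)) ?_
  simpa using (h.const_mul _).sqrt

theorem sub_dotProduct_sub_nonpos_of_forall_le {U : Type*} {φ : U → ℝ} {A : U → n → ℝ}
    {a a' : U} {c c' : n → ℝ} (ha : ∀ z, φ a + c ⬝ᵥ A a ≤ φ z + c ⬝ᵥ A z)
    (ha' : ∀ z, φ a' + c' ⬝ᵥ A a' ≤ φ z + c' ⬝ᵥ A z) : (c - c') ⬝ᵥ (A a - A a') ≤ 0 := by
  have := ha a'
  have := ha' a
  simp only [sub_dotProduct, dotProduct_sub]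
  linarith

/-- The ADMM descent estimate in the shifted variables `d = y - y†`, `e = B (x - x†)`. -/
theorem lyapunov_step [DecidableEq n] {R : Matrix n n ℝ} (hR : R.IsSymm) (hdet : IsUnit R.det)
    {d d' e e' r : n → ℝ} (hd : d' = d + R *ᵥ r)
    (hu : (d' + R *ᵥ (e - e')) ⬝ᵥ (r - e') ≤ 0) (hxdag : d' ⬝ᵥ e' ≤ 0)
    (hx : (d' - d) ⬝ᵥ (e' - e) ≤ 0) :
    d' ⬝ᵥ R⁻¹ *ᵥ d' + e' ⬝ᵥ R *ᵥ e' + r ⬝ᵥ R *ᵥ r + (e' - e) ⬝ᵥ R *ᵥ (e' - e) ≤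
      d ⬝ᵥ R⁻¹ *ᵥ d + e ⬝ᵥ R *ᵥ e := by
  subst hd
  rw [add_sub_cancel_left, hR.mulVec_dotProduct] at hx
  rw [hR.add_mulVec_dotProduct_inv_mulVec hdet]
  have he := hR.add_dotProduct_mulVec_add e (e' - e)
  rw [add_sub_cancel] at he
  simp only [add_dotProduct, dotProduct_sub, hR.mulVec_dotProduct, mulVec_sub, sub_dotProduct]
    at hu hxdag hx he ⊢
  linarith [hR.dotProduct_mulVec_comm r e, hR.dotProduct_mulVec_comm r e',
    hR.dotProduct_mulVec_comm e e']

end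

theorem admm_lyapunov_step {ι κ U : Type*} [Fintype ι] [DecidableEq ι] [Fintype κ]
    {B : Matrix ι κ ℝ} {b : U → ι → ℝ} {f : (κ → ℝ) → ℝ} {g : U → ℝ} {R : Matrix ι ι ℝ}
    (hR : R.IsSymm) (hdet : IsUnit R.det) {udag : U} {xdag : κ → ℝ} {ydag : ι → ℝ}
    (hfeas : b udag + B *ᵥ xdag = 0)
    (hgdag : ∀ u, g udag + ydag ⬝ᵥ b udag ≤ g u + ydag ⬝ᵥ b u)
    (hfdag : ∀ x, f xdag + ydag ⬝ᵥ B *ᵥ xdag ≤ f x + ydag ⬝ᵥ B *ᵥ x)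
    {u' : U} {x x' : κ → ℝ} {y y' r' : ι → ℝ} (hr' : r' = b u' + B *ᵥ x')
    (hy : y' = y + R *ᵥ r')
    (hu : ∀ ζ, g u' + (y' + R *ᵥ B *ᵥ (x - x')) ⬝ᵥ b u' ≤
      g ζ + (y' + R *ᵥ B *ᵥ (x - x')) ⬝ᵥ b ζ)
    (hx' : ∀ ξ, f x' + y' ⬝ᵥ B *ᵥ x' ≤ f ξ + y' ⬝ᵥ B *ᵥ ξ)
    (hx : ∀ ξ, f x + y ⬝ᵥ B *ᵥ x ≤ f ξ + y ⬝ᵥ B *ᵥ ξ) :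
    (y' - ydag) ⬝ᵥ R⁻¹ *ᵥ (y' - ydag) + B *ᵥ (x' - xdag) ⬝ᵥ R *ᵥ B *ᵥ (x' - xdag)
      + r' ⬝ᵥ R *ᵥ r' + B *ᵥ (x' - x) ⬝ᵥ R *ᵥ B *ᵥ (x' - x) ≤
      (y - ydag) ⬝ᵥ R⁻¹ *ᵥ (y - ydag) + B *ᵥ (x - xdag) ⬝ᵥ R *ᵥ B *ᵥ (x - xdag) := by
  have mulVec_sub_sub : ∀ v w w' : κ → ℝ, B *ᵥ (v - w) - B *ᵥ (w' - w) = B *ᵥ (v - w') :=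
    fun v w w' => by rw [← mulVec_sub, sub_sub_sub_cancel_right]
  have hu_dag := sub_dotProduct_sub_nonpos_of_forall_le hu hgdag
  have hx_dag := sub_dotProduct_sub_nonpos_of_forall_le (A := (B *ᵥ ·)) hx' hfdag
  have hx_x := sub_dotProduct_sub_nonpos_of_forall_le (A := (B *ᵥ ·)) hx' hx
  rw [← mulVec_sub_sub x' xdag x]
  refine lyapunov_step hR hdet (by rw [hy]; abel) ?_ ?_ ?_
  · rw [mulVec_sub_sub]
    convert hu_dag using 2
    · abel
    · rw [hr', mulVec_sub, eq_neg_of_add_eq_zero_left hfeas]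
      abel
  · rwa [mulVec_sub]
  · rwa [sub_sub_sub_cancel_right, mulVec_sub_sub, mulVec_sub]

theorem sum_range_le_of_add_le_succ {V D : ℕ → ℝ} (hV : ∀ j, 0 ≤ V j)
    (hstep : ∀ j, V (j + 1) + D j ≤ V j) (N : ℕ) : ∑ j ∈ Finset.range N, D j ≤ V 0 := by
  have hle : ∑ j ∈ Finset.range N, D j ≤ ∑ j ∈ Finset.range N, (V j - V (j + 1)) :=
    Finset.sum_le_sum fun j _ => by linarith [hstep j]
  rw [Finset.sum_range_sub'] at hle
  linarith [hV N]

/-- ADMM convergence. Under the saddle hypotheses on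
`(u†, x†, y†)` and the iteration hypotheses (i)–(iii), the Lyapunov sequence
`V^j = ‖y^j − y†‖²_{R⁻¹} + ‖B(x^j − x†)‖²_R + ‖r^j‖²_R` is nonincreasing,
`Σ_j (‖r^j‖²_R + ‖B(x^{j+1} − x^j)‖²_R) ≤ V^0`, and `r^j → 0`,
`B(x^{j+1} − x^j) → 0`. -/
theorem stmt8 {p m q : ℕ} (B : Matrix (Fin p) (Fin m) ℝ)
    (b : (Fin q → ℝ) → Fin p → ℝ) (f : (Fin m → ℝ) → ℝ) (g : (Fin q → ℝ) → ℝ)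
    (R : Matrix (Fin p) (Fin p) ℝ) (hR : R.PosDef)
    (udag : Fin q → ℝ) (xdag : Fin m → ℝ) (ydag : Fin p → ℝ)
    (hfeas : b udag + B.mulVec xdag = 0)
    (hgdag : ∀ u : Fin q → ℝ, g udag + ydag ⬝ᵥ b udag ≤ g u + ydag ⬝ᵥ b u)
    (hfdag : ∀ x : Fin m → ℝ,
      f xdag + ydag ⬝ᵥ B.mulVec xdag ≤ f x + ydag ⬝ᵥ B.mulVec x)
    (u : ℕ → Fin q → ℝ) (x : ℕ → Fin m → ℝ) (y : ℕ → Fin p → ℝ)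
    (r : ℕ → Fin p → ℝ) (hr : ∀ j, r j = b (u j) + B.mulVec (x j))
    (V : ℕ → ℝ)
    (hV : ∀ j, V j = (y j - ydag) ⬝ᵥ R⁻¹.mulVec (y j - ydag)
      + B.mulVec (x j - xdag) ⬝ᵥ R.mulVec (B.mulVec (x j - xdag))
      + r j ⬝ᵥ R.mulVec (r j))
    (h1 : ∀ j, y (j+1) = y j + R.mulVec (r (j+1)))
    (h2 : ∀ (j : ℕ) (ζ : Fin q → ℝ),
      g (u (j+1)) + (y (j+1) + R.mulVec (B.mulVec (x j - x (j+1)))) ⬝ᵥ b (u (j+1)) ≤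
        g ζ + (y (j+1) + R.mulVec (B.mulVec (x j - x (j+1)))) ⬝ᵥ b ζ)
    (h3 : ∀ (j : ℕ) (ξ : Fin m → ℝ),
      f (x j) + y j ⬝ᵥ B.mulVec (x j) ≤ f ξ + y j ⬝ᵥ B.mulVec ξ) :
    Antitone V ∧
    (∑' j : ℕ, (r j ⬝ᵥ R.mulVec (r j)
      + B.mulVec (x (j+1) - x j) ⬝ᵥ R.mulVec (B.mulVec (x (j+1) - x j)))) ≤ V 0 ∧
    Tendsto r atTop (nhds 0) ∧
    Tendsto (fun j => B.mulVec (x (j+1) - x j)) atTop (nhds 0) := by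
  have hq : ∀ v, 0 ≤ v ⬝ᵥ R *ᵥ v := fun v => by
    simpa using hR.posSemidef.dotProduct_mulVec_nonneg v
  have hq_inv : ∀ v, 0 ≤ v ⬝ᵥ R⁻¹ *ᵥ v := fun v => by
    simpa using hR.inv.posSemidef.dotProduct_mulVec_nonneg v
  have hV_nonneg : ∀ j, 0 ≤ V j := fun j => by
    rw [hV]
    linarith [hq_inv (y j - ydag), hq (B *ᵥ (x j - xdag)), hq (r j)]
  have hstep : ∀ j, V (j + 1) + (r j ⬝ᵥ R *ᵥ r j
      + B *ᵥ (x (j + 1) - x j) ⬝ᵥ R *ᵥ B *ᵥ (x (j + 1) - x j)) ≤ V j := fun j => by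
    have := admm_lyapunov_step (isHermitian_iff_isSymm.mp hR.isHermitian) hR.det_pos.ne'.isUnit
      hfeas hgdag hfdag (hr (j + 1)) (h1 j) (h2 j) (h3 (j + 1)) (h3 j)
    rw [hV, hV]
    linarith
  have hD_nonneg : ∀ j, 0 ≤ r j ⬝ᵥ R *ᵥ r j
      + B *ᵥ (x (j + 1) - x j) ⬝ᵥ R *ᵥ B *ᵥ (x (j + 1) - x j) := fun j =>
    add_nonneg (hq _) (hq _)
  have hpartial := sum_range_le_of_add_le_succ hV_nonneg hstep
  have hD_lim := (summable_of_sum_range_le hD_nonneg hpartial).tendsto_atTop_zero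
  refine ⟨antitone_nat_of_succ_le fun j => by linarith [hstep j, hD_nonneg j],
    Real.tsum_le_of_sum_range_le hD_nonneg hpartial,
    hR.tendsto_zero_of_tendsto_dotProduct_mulVec ?_,
    hR.tendsto_zero_of_tendsto_dotProduct_mulVec ?_⟩
  · exact squeeze_zero (fun j => hq _) (fun j => le_add_of_nonneg_right (hq _)) hD_lim
  · exact squeeze_zero (fun j => hq _) (fun j => le_add_of_nonneg_left (hq (r j))) hD_lim
end

section
/- Under the hypotheses of the ADMM convergence theorem (i.e., (u†, x†, y†) satisfying b(u†)+Bx† = 0 and the two saddle minimization inequalities, and a sequence (u^j, x^j, y^j)_{j≥0} satisfying the dual update y^{j+1} = y^j + R r^{j+1} with r^j = b(u^j)+Bx^j, the u-update global minimization inequality g(u^{j+1}) + (y^{j+1} + RB(x^j − x^{j+1}))ᵀ b(u^{j+1}) ≤ g(ζ) + (y^{j+1} + RB(x^j − x^{j+1}))ᵀ b(ζ) for all ζ, and the x-update global minimization inequality f(x^j) + (y^j)ᵀBx^j ≤ f(ξ) + (y^j)ᵀBξ for all ξ, for every j ≥ 0), for any c > 0: if V^0 ≤ c then V^j ≤ c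 for all j ≥ 0, where V^j = ‖y^j − y†‖²_{R⁻¹} + ‖B(x^j − x†)‖²_R + ‖r^j‖²_R; i.e., the sublevel set S_c = {(u,x,y) : ‖y − y†‖²_{R⁻¹} + ‖B(x − x†)‖²_R + ‖b(u)+Bx‖²_R ≤ c} is positively invariant for the iteration. -/
open Matrix

/-- Positive invariance of the sublevel set
`S_c = {(u,x,y) : ‖y − y†‖²_{R⁻¹} + ‖B(x − x†)‖²_R + ‖b(u)+Bx‖²_R ≤ c}`
under the ADMM iteration: if `V^0 ≤ c` then `V^j ≤ c` for all `j`. -/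
theorem stmt9 {p m q : ℕ} (B : Matrix (Fin p) (Fin m) ℝ)
    (b : (Fin q → ℝ) → Fin p → ℝ) (f : (Fin m → ℝ) → ℝ) (g : (Fin q → ℝ) → ℝ)
    (R : Matrix (Fin p) (Fin p) ℝ) (hR : R.PosDef)
    (udag : Fin q → ℝ) (xdag : Fin m → ℝ) (ydag : Fin p → ℝ)
    (hfeas : b udag + B.mulVec xdag = 0)
    (hgdag : ∀ u : Fin q → ℝ, g udag + ydag ⬝ᵥ b udag ≤ g u + ydag ⬝ᵥ b u)
    (hfdag : ∀ x : Fin m → ℝ,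
      f xdag + ydag ⬝ᵥ B.mulVec xdag ≤ f x + ydag ⬝ᵥ B.mulVec x)
    (u : ℕ → Fin q → ℝ) (x : ℕ → Fin m → ℝ) (y : ℕ → Fin p → ℝ)
    (r : ℕ → Fin p → ℝ) (hr : ∀ j, r j = b (u j) + B.mulVec (x j))
    (V : ℕ → ℝ)
    (hV : ∀ j, V j = (y j - ydag) ⬝ᵥ R⁻¹.mulVec (y j - ydag)
      + B.mulVec (x j - xdag) ⬝ᵥ R.mulVec (B.mulVec (x j - xdag))
      + r j ⬝ᵥ R.mulVec (r j))
    (h1 : ∀ j, y (j+1) = y j + R.mulVec (r (j+1)))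
    (h2 : ∀ (j : ℕ) (ζ : Fin q → ℝ),
      g (u (j+1)) + (y (j+1) + R.mulVec (B.mulVec (x j - x (j+1)))) ⬝ᵥ b (u (j+1)) ≤
        g ζ + (y (j+1) + R.mulVec (B.mulVec (x j - x (j+1)))) ⬝ᵥ b ζ)
    (h3 : ∀ (j : ℕ) (ξ : Fin m → ℝ),
      f (x j) + y j ⬝ᵥ B.mulVec (x j) ≤ f ξ + y j ⬝ᵥ B.mulVec ξ)
    (c : ℝ) (hc : 0 < c) (h0 : V 0 ≤ c) :
    ∀ j : ℕ, V j ≤ c := by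
  -- basic facts about R
  have hRsymm : Rᵀ = R := by simpa using hR.isHermitian.eq
  have hpos : ∀ v : Fin p → ℝ, 0 ≤ v ⬝ᵥ R.mulVec v := fun v => by
    simpa using hR.posSemidef.re_dotProduct_nonneg v
  have hsym : ∀ a b : Fin p → ℝ, a ⬝ᵥ R.mulVec b = b ⬝ᵥ R.mulVec a := fun a b => by
    rw [Matrix.dotProduct_mulVec, ← Matrix.mulVec_transpose, hRsymm, dotProduct_comm]
  have hinvsymm : (R⁻¹)ᵀ = R⁻¹ := by rw [Matrix.transpose_nonsing_inv, hRsymm]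
  have hsyminv : ∀ a b : Fin p → ℝ, a ⬝ᵥ R⁻¹.mulVec b = b ⬝ᵥ R⁻¹.mulVec a := fun a b => by
    rw [Matrix.dotProduct_mulVec, ← Matrix.mulVec_transpose, hinvsymm, dotProduct_comm]
  have hdet : IsUnit R.det := hR.det_pos.ne'.isUnit
  have hcancel : ∀ v : Fin p → ℝ, R⁻¹.mulVec (R.mulVec v) = v := fun v => by
    rw [Matrix.mulVec_mulVec, Matrix.nonsing_inv_mul R hdet, Matrix.one_mulVec]
  -- monotonicity step
  have hstep : ∀ j, V (j+1) ≤ V j := by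
    intro j
    set r1 : Fin p → ℝ := r (j+1) with hr1
    set ey : Fin p → ℝ := y (j+1) - ydag with hey
    set s : Fin p → ℝ := B.mulVec (x j - x (j+1)) with hs
    set d : Fin p → ℝ := B.mulVec (x (j+1) - xdag) with hd
    set r0 : Fin p → ℝ := r j with hr0
    have hbd : b udag = -(B.mulVec xdag) := by
      rw [eq_neg_iff_add_eq_zero]; exact hfeas
    -- inequality I (from the u-updates and the g saddle inequality)
    have hI : (ey + R.mulVec s) ⬝ᵥ (r1 - d) ≤ 0 := by
      have hA := h2 j udag
      have hB := hgdag (u (j+1))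
      have hdiff : b (u (j+1)) - b udag = r1 - d := by
        have hbu : b (u (j+1)) = r1 - B.mulVec (x (j+1)) := by
          rw [hr1, hr (j+1)]; abel
        rw [hbu, hbd, hd, Matrix.mulVec_sub]; abel
      have key : (y (j+1) + R.mulVec s - ydag) ⬝ᵥ (b (u (j+1)) - b udag) ≤ 0 := by
        simp only [sub_dotProduct, dotProduct_sub, add_dotProduct] at *
        linarith
      have heq : y (j+1) + R.mulVec s - ydag = ey + R.mulVec s := by
        rw [hey]; abel
      rwa [heq, hdiff] at key
    -- inequality II (from the x-update at step j+1 and the f saddle inequality)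
    have hII : ey ⬝ᵥ d ≤ 0 := by
      have hC := h3 (j+1) xdag
      have hD := hfdag (x (j+1))
      have hdd : d = B.mulVec (x (j+1)) - B.mulVec xdag := by
        rw [hd, Matrix.mulVec_sub]
      rw [hey, hdd]
      simp only [sub_dotProduct, dotProduct_sub]
      linarith
    -- inequality M (monotonicity of the x-updates)
    have hM : 0 ≤ (R.mulVec r1) ⬝ᵥ s := by
      have hE := h3 j (x (j+1))
      have hF := h3 (j+1) (x j)
      have key : (y (j+1) - y j) ⬝ᵥ (B.mulVec (x (j+1)) - B.mulVec (x j)) ≤ 0 := by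
        simp only [sub_dotProduct, dotProduct_sub]
        linarith
      have h1j : y (j+1) - y j = R.mulVec r1 := by rw [h1 j, hr1]; abel
      have hsneg : B.mulVec (x (j+1)) - B.mulVec (x j) = -s := by
        rw [hs, Matrix.mulVec_sub]; abel
      rw [h1j, hsneg, dotProduct_neg] at key
      linarith
    -- expansion of V j
    have hy : y j - ydag = ey - R.mulVec r1 := by
      have : y j = y (j+1) - R.mulVec r1 := by rw [h1 j, hr1]; abel
      rw [this, hey]; abel
    have hx : B.mulVec (x j - xdag) = d + s := by
      rw [hd, hs, ← Matrix.mulVec_add]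
      congr 1
      abel
    have VJ : V j = ey ⬝ᵥ R⁻¹.mulVec ey - 2 * (ey ⬝ᵥ r1) + r1 ⬝ᵥ R.mulVec r1
        + (d ⬝ᵥ R.mulVec d + 2 * (d ⬝ᵥ R.mulVec s) + s ⬝ᵥ R.mulVec s)
        + r0 ⬝ᵥ R.mulVec r0 := by
      rw [hV j, hy, hx]
      simp only [Matrix.mulVec_sub, Matrix.mulVec_add, sub_dotProduct,
        dotProduct_sub, add_dotProduct, dotProduct_add, hcancel]
      rw [hsyminv (R.mulVec r1) ey, hcancel, hsym s d,
        dotProduct_comm (R.mulVec r1) r1]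
      ring
    have VJ1 : V (j+1) = ey ⬝ᵥ R⁻¹.mulVec ey + d ⬝ᵥ R.mulVec d + r1 ⬝ᵥ R.mulVec r1 := by
      rw [hV (j+1)]
    -- put the pieces together
    have e1 : (R.mulVec s) ⬝ᵥ r1 = (R.mulVec r1) ⬝ᵥ s := by
      rw [dotProduct_comm (R.mulVec s) r1, hsym r1 s, dotProduct_comm s (R.mulVec r1)]
    have e2 : (R.mulVec s) ⬝ᵥ d = d ⬝ᵥ R.mulVec s := dotProduct_comm _ _
    have hI' : ey ⬝ᵥ r1 + (R.mulVec s) ⬝ᵥ r1 - (ey ⬝ᵥ d + (R.mulVec s) ⬝ᵥ d) ≤ 0 := by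
      simpa only [add_dotProduct, dotProduct_sub] using hI
    have hss := hpos s
    have hrr := hpos r0
    rw [VJ, VJ1]
    rw [e1, e2] at hI'
    linarith
  -- conclude by induction
  intro j
  induction j with
  | zero => exact h0
  | succ n ih => exact le_trans (hstep n) ih
end

section
/- Let B ∈ ℝ^{p×m}, R ∈ ℝ^{p×p}, b : ℝ^q → ℝ^p differentiable at u⁺ with Jacobian Db(u⁺), f : ℝ^m → ℝ differentiable at x⁺, g : ℝ^q → ℝ differentiable at u⁺. Let u⁺ ∈ ℝ^q, x, x⁺ ∈ ℝ^m, y ∈ ℝ^p, and suppose: (a) ∇f(x⁺) + Bᵀ y + Bᵀ R (b(u⁺) + B x⁺) = 0; (b) ∇g(u⁺) + [Db(u⁺)]ᵀ (y + R (b(u⁺) + B x)) = 0; (c) y⁺ = y + R (b(u⁺) + B x⁺). Define r⁺ = b(u⁺) + B x⁺ and s⁺ = [Db(u⁺)]ᵀ R B (x − x⁺). Then the first-order optimality conditions [r⁺ = 0, ∇g(u⁺) + [Db(u⁺)]ᵀ y⁺ = 0, and ∇f(x⁺) + Bᵀ y⁺ = 0] hold if and only if r⁺ = 0 and s⁺ =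 0. -/
open Matrix

/-- The continuous linear map `w ↦ v ⬝ᵥ w` on `ℝ^n`, used to express that a
vector `v` is the gradient of a scalar function. -/
noncomputable def dotCLM {n : ℕ} (v : Fin n → ℝ) : (Fin n → ℝ) →L[ℝ] ℝ :=
  ∑ i, v i • (ContinuousLinearMap.proj i : ((Fin n → ℝ)) →L[ℝ] ℝ)

/-- Under the ADMM optimality hypotheses (a)–(c), the first-order
optimality conditions `r⁺ = 0`, `∇g(u⁺) + [Db(u⁺)]ᵀ y⁺ = 0`,
`∇f(x⁺) + Bᵀ y⁺ = 0` hold if and only if `r⁺ = 0` and `s⁺ = 0`. -/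
theorem stmt11 {p m q : ℕ} (B : Matrix (Fin p) (Fin m) ℝ)
    (R : Matrix (Fin p) (Fin p) ℝ)
    (b : (Fin q → ℝ) → Fin p → ℝ) (f : (Fin m → ℝ) → ℝ) (g : (Fin q → ℝ) → ℝ)
    (uplus : Fin q → ℝ) (x xplus : Fin m → ℝ) (y : Fin p → ℝ)
    (Db : Matrix (Fin p) (Fin q) ℝ)
    (hb : HasFDerivAt b (LinearMap.toContinuousLinearMap Db.mulVecLin) uplus)
    (gradf : Fin m → ℝ) (hf : HasFDerivAt f (dotCLM gradf) xplus)
    (gradg : Fin q → ℝ) (hg : HasFDerivAt g (dotCLM gradg) uplus)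
    (ha : gradf + Bᵀ.mulVec y
      + Bᵀ.mulVec (R.mulVec (b uplus + B.mulVec xplus)) = 0)
    (hb' : gradg + Dbᵀ.mulVec (y + R.mulVec (b uplus + B.mulVec x)) = 0)
    (yplus : Fin p → ℝ)
    (hc : yplus = y + R.mulVec (b uplus + B.mulVec xplus))
    (rplus : Fin p → ℝ) (hrp : rplus = b uplus + B.mulVec xplus)
    (splus : Fin q → ℝ)
    (hsp : splus = Dbᵀ.mulVec (R.mulVec (B.mulVec (x - xplus)))) :
    (rplus = 0 ∧ gradg + Dbᵀ.mulVec yplus = 0 ∧ gradf + Bᵀ.mulVec yplus = 0) ↔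
      (rplus = 0 ∧ splus = 0) := by
  subst hc hrp hsp
  have h3 : gradf + Bᵀ.mulVec (y + R.mulVec (b uplus + B.mulVec xplus)) = 0 := by
    simpa [mulVec_add, add_assoc] using ha
  have h2 : gradg + Dbᵀ.mulVec (y + R.mulVec (b uplus + B.mulVec xplus))
      = -(Dbᵀ.mulVec (R.mulVec (B.mulVec (x - xplus)))) := by
    simp only [mulVec_add, mulVec_sub] at hb' ⊢
    linear_combination (norm := module) hb'
  rw [h2, h3]
  constructor
  · rintro ⟨h1, hs, -⟩
    exact ⟨h1, by simpa using neg_eq_zero.mp hs⟩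
  · rintro ⟨h1, hs⟩
    exact ⟨h1, by rw [hs, neg_zero], rfl⟩
end
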